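/- Let f ∈ ℍ[X] be monic with deg f ≥ 1. Then the snail sn(f) is a compact subset of ℍ. -/

import Mathlib

open Polynomial

noncomputable section

/-- The real subalgebra `ℂ_I = ℝ·1 + ℝ·I` of `ℍ`, as an `ℝ`-submodule. -/
def CI (I : Quaternion ℝ) : Submodule ℝ (Quaternion ℝ) :=
  Submodule.span ℝ {1, I}

/-- The orthogonal projection `π_I : ℍ → ℂ_I`, viewed as a map `ℍ → ℍ`. -/
def piI (I : Quaternion ℝ) (a : Quaternion ℝ) : Quaternion ℝ :=
  ((CI I).orthogonalProjectionOnto a : Quaternion ℝ)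

/-- `f_I = ∑ₖ π_I(aₖ) Xᵏ`, the projection of the coefficients of `f` onto `ℂ_I`. -/
def polyProj (I : Quaternion ℝ) (f : Polynomial (Quaternion ℝ)) :
    Polynomial (Quaternion ℝ) :=
  f.sum fun k a => C (piI I a) * X ^ k

open scoped Classical in
/-- `K_{ℂ_I}(f_I)`: the convex hull of the roots of `f_I` in `ℂ_I` if `f_I` is
nonconstant, and all of `ℂ_I` otherwise. -/
def KSet (I : Quaternion ℝ) (f : Polynomial (Quaternion ℝ)) : Set (Quaternion ℝ) :=
  if 0 < (polyProj I f).natDegree then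
    convexHull ℝ {r : Quaternion ℝ | r ∈ CI I ∧ Polynomial.eval r (polyProj I f) = 0}
  else (CI I : Set (Quaternion ℝ))

/-- The Gauss–Lucas snail `sn(f) = ⋃_I K_{ℂ_I}(f_I)`, the union over all `I`
of trace `0` and norm `1`. -/
def snail (f : Polynomial (Quaternion ℝ)) : Set (Quaternion ℝ) :=
  ⋃ (I : Quaternion ℝ) (_ : I.re = 0 ∧ ‖I‖ = 1), KSet I f

/-!
Let `S` be the sphere of imaginary units and `Z ⊆ S × ℍ` the set of pairs `(I, r)` with
`r ∈ ℂ_I` a root of `f_I`. On `S`, `π_I a = ⟨1, a⟩ + ⟨I, a⟩ I` depends continuously on `I`, so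
`Z` is closed; every `f_I` is monic of degree `deg f` with coefficients no larger than those of
`f`, so Cauchy's bound for `f` bounds all their roots and `Z` is compact, hence so is `conv Z`.
A unit vector `I` is an exposed point of the unit ball, so the part of `conv Z` lying over `I`
is `{I} × conv (roots of f_I in ℂ_I) = {I} × K_{ℂ_I}(f_I)`. Thus `sn(f)` is the image of the
compact set `conv Z ∩ (S × ℍ)` under the second projection.
-/

open Set
open scoped RealInnerProductSpace

theorem Submodule.starProjection_span_pair_apply {E : Type*} [NormedAddCommGroup E]
    [InnerProductSpace ℝ E] {u v : E} [(span ℝ {u, v}).HasOrthogonalProjection]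
    (hu : ‖u‖ = 1) (hv : ‖v‖ = 1) (huv : ⟪u, v⟫ = 0)
    (a : E) : (span ℝ {u, v}).starProjection a = ⟪u, a⟫ • u + ⟪v, a⟫ • v := by
  refine eq_starProjection_of_mem_of_inner_eq_zero
    (add_mem (smul_mem _ _ (subset_span (by simp))) (smul_mem _ _ (subset_span (by simp)))) ?_
  intro w hw
  obtain ⟨m, n, rfl⟩ := mem_span_pair.mp hw
  have hvu : ⟪v, u⟫ = 0 := by rw [real_inner_comm, huv]
  simp only [inner_sub_left, inner_add_left, inner_add_right, real_inner_smul_left,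
    real_inner_smul_right, real_inner_self_eq_norm_sq, hu, hv, huv, hvu, real_inner_comm a]
  ring

theorem mem_convexHull_inter_preimage_of_le {𝕜 E : Type*} [Field 𝕜] [LinearOrder 𝕜]
    [IsStrictOrderedRing 𝕜] [AddCommGroup E] [Module 𝕜 E] (ℓ : E →ₗ[𝕜] 𝕜) {s : Set E} {c : 𝕜}
    (hs : ∀ z ∈ s, ℓ z ≤ c) {x : E} (hx : x ∈ convexHull 𝕜 s) (hcx : c ≤ ℓ x) :
    x ∈ convexHull 𝕜 (s ∩ ℓ ⁻¹' {c}) := by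
  obtain ⟨ι, _, z, w, hzs, -, hw, hw1, rfl⟩ := eq_pos_convex_span_of_mem_convexHull hx
  have hgap : ∀ i, 0 ≤ w i * (c - ℓ (z i)) := fun i =>
    mul_nonneg (hw i).le (sub_nonneg.mpr (hs _ (hzs (mem_range_self i))))
  have hsum : ∑ i, w i * (c - ℓ (z i)) = c - ℓ (∑ i, w i • z i) := by
    simp [mul_sub, Finset.sum_sub_distrib, ← Finset.sum_mul, hw1]
  have hz : ∀ i, ℓ (z i) = c := fun i => by
    have := (Finset.sum_eq_zero_iff_of_nonneg fun i _ => hgap i).mp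
      (le_antisymm (by linarith) (Finset.sum_nonneg fun i _ => hgap i)) i (Finset.mem_univ i)
    linarith [(mul_eq_zero.mp this).resolve_left (hw i).ne']
  exact (convex_convexHull 𝕜 _).sum_mem (fun i _ => (hw i).le) hw1
    fun i _ => subset_convexHull 𝕜 _ ⟨hzs (mem_range_self i), hz i⟩

theorem mk_mem_convexHull_iff_of_norm_fst_eq_one {E F : Type*} [NormedAddCommGroup E]
    [InnerProductSpace ℝ E] [AddCommGroup F] [Module ℝ F] {s : Set (E × F)}
    (hs : ∀ p ∈ s, ‖p.1‖ = 1) {u : E} (hu : ‖u‖ = 1) {y : F} :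
    (u, y) ∈ convexHull ℝ s ↔ y ∈ convexHull ℝ {r | (u, r) ∈ s} := by
  let slice := {u} ×ˢ {r | (u, r) ∈ s}
  have hslice : convexHull ℝ slice = {u} ×ˢ convexHull ℝ {r | (u, r) ∈ s} := by
    rw [convexHull_prod, convexHull_singleton]
  constructor
  · intro h
    let ℓ : E × F →ₗ[ℝ] ℝ := innerₛₗ ℝ u ∘ₗ LinearMap.fst ℝ E F
    have hface : s ∩ ℓ ⁻¹' {1} ⊆ slice := by
      rintro ⟨v, r⟩ ⟨hvr, huv⟩
      obtain rfl : u = v := (inner_eq_one_iff_of_norm_eq_one hu (hs _ hvr)).mp huv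
      exact ⟨rfl, hvr⟩
    have hℓ : ∀ p ∈ s, ℓ p ≤ 1 := fun p hp =>
      (real_inner_le_norm u p.1).trans (by rw [hu, hs p hp, one_mul])
    have := convexHull_mono hface (mem_convexHull_inter_preimage_of_le ℓ hℓ h (by simp [ℓ, hu]))
    exact (hslice ▸ this).2
  · intro h
    refine convexHull_mono ?_ (hslice ▸ ⟨rfl, h⟩ : (u, y) ∈ convexHull ℝ slice)
    rintro ⟨v, r⟩ ⟨rfl, hr⟩
    exact hr

theorem IsCompact.convexHull {E : Type*} [NormedAddCommGroup E]
    [NormedSpace ℝ E] [FiniteDimensional ℝ E] {s : Set E} (hs : IsCompact s) :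
    IsCompact (convexHull ℝ s) := by
  let comb (m : ℕ) (q : (Fin m → ℝ) × (Fin m → E)) : E := ∑ i, q.1 i • q.2 i
  let simplices (m : ℕ) := stdSimplex ℝ (Fin m) ×ˢ univ.pi fun _ : Fin m => s
  suffices h : _root_.convexHull ℝ s =
      ⋃ m ∈ Finset.range (Module.finrank ℝ E + 2), comb m '' simplices m by
    rw [h]
    refine (Finset.range _).isCompact_biUnion fun m _ => ?_
    exact ((isCompact_stdSimplex ℝ _).prod (isCompact_univ_pi fun _ => hs)).image
      (by fun_prop)
  refine subset_antisymm (fun x hx => ?_) ?_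
  · obtain ⟨ι, _, z, w, hzs, hind, hw, hw1, rfl⟩ := eq_pos_convex_span_of_mem_convexHull hx
    have hcard : Fintype.card ι < Module.finrank ℝ E + 2 :=
      Nat.lt_succ_of_le (hind.card_le_finrank_succ.trans (by gcongr; exact Submodule.finrank_le _))
    let e := (Fintype.equivFin ι).symm
    exact mem_biUnion (Finset.mem_range.mpr hcard) ⟨(w ∘ e, z ∘ e),
      ⟨⟨fun i => (hw _).le, (e.sum_comp w).trans hw1⟩, fun i _ => hzs (mem_range_self _)⟩,
      e.sum_comp fun i => w i • z i⟩
  · simp only [iUnion_subset_iff, image_subset_iff]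
    rintro m - ⟨w, z⟩ ⟨⟨hw, hw1⟩, hz⟩
    exact (convex_convexHull ℝ s).sum_mem (fun i _ => hw i) hw1
      fun i _ => subset_convexHull ℝ s (hz i (mem_univ i))

def imaginaryUnits : Set (Quaternion ℝ) := {I | I.re = 0 ∧ ‖I‖ = 1}

theorem isClosed_imaginaryUnits : IsClosed imaginaryUnits :=
  (isClosed_eq Quaternion.continuous_re continuous_const).inter
    (isClosed_eq continuous_norm continuous_const)

theorem isCompact_imaginaryUnits : IsCompact imaginaryUnits :=
  (isCompact_sphere 0 1).of_isClosed_subset isClosed_imaginaryUnits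
    fun _ hI => mem_sphere_zero_iff_norm.mpr hI.2

theorem piI_apply {I : Quaternion ℝ} (hI : I ∈ imaginaryUnits) (a : Quaternion ℝ) :
    piI I a = ⟪1, a⟫ • 1 + ⟪I, a⟫ • I := by
  rw [piI, ← Submodule.starProjection_apply]
  exact Submodule.starProjection_span_pair_apply norm_one hI.2
    (by simp [Quaternion.inner_def, hI.1]) a

theorem piI_eq_self_iff {I a : Quaternion ℝ} : piI I a = a ↔ a ∈ CI I := by
  rw [piI, ← Submodule.starProjection_apply, Submodule.starProjection_eq_self_iff]

theorem piI_zero (I : Quaternion ℝ) : piI I 0 = 0 := by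
  simp [piI]

theorem piI_one (I : Quaternion ℝ) : piI I 1 = 1 :=
  piI_eq_self_iff.mpr (Submodule.subset_span (by simp))

theorem norm_piI_le (I a : Quaternion ℝ) : ‖piI I a‖ ≤ ‖a‖ := by
  rw [piI, ← Submodule.starProjection_apply]
  exact Submodule.norm_starProjection_apply_le _ a

theorem coeff_polyProj (I : Quaternion ℝ) (f : (Quaternion ℝ)[X]) (k : ℕ) :
    (polyProj I f).coeff k = piI I (f.coeff k) := by
  simp only [polyProj, Polynomial.sum_def, finsetSum_coeff, coeff_C_mul_X_pow]
  rw [Finset.sum_ite_eq, ite_eq_left_iff, notMem_support_iff]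
  intro h
  rw [h, piI_zero]

theorem natDegree_polyProj_le (I : Quaternion ℝ) (f : (Quaternion ℝ)[X]) :
    (polyProj I f).natDegree ≤ f.natDegree :=
  natDegree_le_iff_coeff_eq_zero.mpr fun k hk => by
    rw [coeff_polyProj, coeff_eq_zero_of_natDegree_lt hk, piI_zero]

theorem natDegree_polyProj_of_monic (I : Quaternion ℝ) {f : (Quaternion ℝ)[X]} (hf : f.Monic) :
    (polyProj I f).natDegree = f.natDegree :=
  (natDegree_polyProj_le I f).antisymm <| le_natDegree_of_ne_zero <| by
    rw [coeff_polyProj, hf.coeff_natDegree, piI_one]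
    exact one_ne_zero

theorem monic_polyProj (I : Quaternion ℝ) {f : (Quaternion ℝ)[X]} (hf : f.Monic) :
    (polyProj I f).Monic := by
  rw [Monic.def, leadingCoeff, natDegree_polyProj_of_monic I hf, coeff_polyProj,
    hf.coeff_natDegree, piI_one]

theorem cauchyBound_polyProj_le (I : Quaternion ℝ) {f : (Quaternion ℝ)[X]} (hf : f.Monic) :
    cauchyBound (polyProj I f) ≤ cauchyBound f := by
  simp only [cauchyBound, (monic_polyProj I hf).leadingCoeff, hf.leadingCoeff,
    natDegree_polyProj_of_monic I hf, coeff_polyProj]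
  gcongr
  exact norm_piI_le I _

def rootPairs (f : (Quaternion ℝ)[X]) : Set (Quaternion ℝ × Quaternion ℝ) :=
  {p | p.1 ∈ imaginaryUnits ∧ p.2 ∈ CI p.1 ∧ eval p.2 (polyProj p.1 f) = 0}

theorem isClosed_rootPairs (f : (Quaternion ℝ)[X]) : IsClosed (rootPairs f) := by
  let g (p : Quaternion ℝ × Quaternion ℝ) : Quaternion ℝ × Quaternion ℝ :=
    (piI p.1 p.2 - p.2, eval p.2 (polyProj p.1 f))
  -- `piI I` agrees with a formula continuous in `I` only on imaginary units.
  have hg : ContinuousOn g (imaginaryUnits ×ˢ univ) := by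
    let π (I a : Quaternion ℝ) : Quaternion ℝ := ⟪1, a⟫ • 1 + ⟪I, a⟫ • I
    have hπ : Continuous fun p : Quaternion ℝ × Quaternion ℝ =>
        (π p.1 p.2 - p.2, ∑ k ∈ Finset.range (f.natDegree + 1), π p.1 (f.coeff k) * p.2 ^ k) := by
      fun_prop
    refine hπ.continuousOn.congr fun p hp => ?_
    simp only [g, piI_apply hp.1, π,
      eval_eq_sum_range' (Nat.lt_succ_of_le (natDegree_polyProj_le p.1 f)), coeff_polyProj]
  convert hg.preimage_isClosed_of_isClosed (isClosed_imaginaryUnits.prod isClosed_univ)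
    (isClosed_singleton (x := 0)) using 1
  ext p
  simp [rootPairs, g, sub_eq_zero, piI_eq_self_iff]

theorem isCompact_rootPairs {f : (Quaternion ℝ)[X]} (hf : f.Monic) : IsCompact (rootPairs f) := by
  refine .of_isClosed_subset
    (isCompact_imaginaryUnits.prod (isCompact_closedBall 0 (cauchyBound f)))
    (isClosed_rootPairs f) fun p hp => ⟨hp.1, ?_⟩
  have := (IsRoot.norm_lt_cauchyBound (monic_polyProj p.1 hf).ne_zero hp.2.2).trans_le
    (cauchyBound_polyProj_le p.1 hf)
  exact mem_closedBall_zero_iff.mpr (NNReal.coe_le_coe.mpr this.le)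

theorem mem_KSet_iff {f : (Quaternion ℝ)[X]} (hf : f.Monic) (hn : 1 ≤ f.natDegree)
    {I : Quaternion ℝ} (hI : I ∈ imaginaryUnits) {x : Quaternion ℝ} :
    x ∈ KSet I f ↔ (I, x) ∈ convexHull ℝ (rootPairs f) := by
  rw [mk_mem_convexHull_iff_of_norm_fst_eq_one (fun p hp => hp.1.2) hI.2, KSet,
    if_pos (by rw [natDegree_polyProj_of_monic I hf]; omega)]
  simp [rootPairs, hI]

theorem snail_eq_image_convexHull_rootPairs {f : (Quaternion ℝ)[X]} (hf : f.Monic)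
    (hn : 1 ≤ f.natDegree) :
    snail f = Prod.snd '' (convexHull ℝ (rootPairs f) ∩ imaginaryUnits ×ˢ univ) := by
  ext x
  simp only [snail, mem_iUnion, mem_image, mem_inter_iff, mem_prod, mem_univ, and_true,
    Prod.exists, exists_eq_right]
  exact exists_congr fun I => ⟨fun ⟨hI, hx⟩ => ⟨(mem_KSet_iff hf hn hI).mp hx, hI⟩,
    fun ⟨hx, hI⟩ => ⟨hI, (mem_KSet_iff hf hn hI).mpr hx⟩⟩

theorem snail_isCompact
    (f : Polynomial (Quaternion ℝ)) (hmonic : f.Monic) (hn : 1 ≤ f.natDegree) :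
    IsCompact (snail f) := by
  rw [snail_eq_image_convexHull_rootPairs hmonic hn]
  exact ((isCompact_rootPairs hmonic).convexHull.inter_right
    (isClosed_imaginaryUnits.prod isClosed_univ)).image continuous_snd
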